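/- arXiv:1608.07847 — 3 statements merged into one kernel-verified Lean document; each statement's English description precedes it below -/
import Mathlib

section
/- For an m×n matrix over colors [1,σ], the number of maximal rectangles (rectangles whose fingerprint strictly grows under any one-step extension in any of the four directions) is at most n·m²·σ. -/
/-! For fixed rows `i₀ ≤ i₁` and right column `j₁`, moving the left column `j₀` of a maximal
rectangle further left strictly enlarges its fingerprint, so `j₀` is determined by the
fingerprint size, which lies in `[1, σ]`. Hence `(i₀, i₁, j₁, |fingerprint|)` determines a maximal
rectangle, and there are at most `m · m · n · σ` such tuples. -/

/-- The fingerprint (set of distinct colors) of the rectangle ⟨i₀,i₁;j₀,j₁⟩ of the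
image `M`. -/
def fpF {m n σ : ℕ} (M : Fin m → Fin n → Fin σ) (i0 i1 : Fin m) (j0 j1 : Fin n) :
    Finset (Fin σ) :=
  Finset.image (fun p : Fin m × Fin n => M p.1 p.2)
    (Finset.univ.filter fun p : Fin m × Fin n =>
      i0 ≤ p.1 ∧ p.1 ≤ i1 ∧ j0 ≤ p.2 ∧ p.2 ≤ j1)

/-- A rectangle is maximal if every rectangle properly containing it has a strictly
larger fingerprint. -/
def MaximalRect {m n σ : ℕ} (M : Fin m → Fin n → Fin σ)
    (i0 i1 : Fin m) (j0 j1 : Fin n) : Prop :=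
  i0 ≤ i1 ∧ j0 ≤ j1 ∧
  ∀ i0' i1' : Fin m, ∀ j0' j1' : Fin n,
    i0' ≤ i0 → i1 ≤ i1' → j0' ≤ j0 → j1 ≤ j1' →
    (i0', i1', j0', j1') ≠ (i0, i1, j0, j1) →
    fpF M i0 i1 j0 j1 ⊂ fpF M i0' i1' j0' j1'

section Fingerprint

variable {m n σ : ℕ} (M : Fin m → Fin n → Fin σ)

lemma corner_mem_fpF {i0 i1 : Fin m} {j0 j1 : Fin n} (hi : i0 ≤ i1) (hj : j0 ≤ j1) :
    M i0 j0 ∈ fpF M i0 i1 j0 j1 := by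
  simp only [fpF, Finset.mem_image, Finset.mem_filter, Finset.mem_univ, true_and]
  exact ⟨(i0, j0), ⟨le_rfl, hi, le_rfl, hj⟩, rfl⟩

lemma card_fpF_mem_Icc {i0 i1 : Fin m} {j0 j1 : Fin n} (hi : i0 ≤ i1) (hj : j0 ≤ j1) :
    (fpF M i0 i1 j0 j1).card ∈ Finset.Icc 1 σ :=
  Finset.mem_Icc.mpr
    ⟨Finset.card_pos.mpr ⟨_, corner_mem_fpF M hi hj⟩,
      (Finset.card_le_univ _).trans_eq (Fintype.card_fin σ)⟩

variable {M}

lemma MaximalRect.card_fpF_lt_of_lt {i0 i1 : Fin m} {j0 j0' j1 : Fin n}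
    (hmax : MaximalRect M i0 i1 j0' j1) (h : j0 < j0') :
    (fpF M i0 i1 j0' j1).card < (fpF M i0 i1 j0 j1).card := by
  refine Finset.card_lt_card (hmax.2.2 i0 i1 j0 j1 le_rfl le_rfl h.le le_rfl ?_)
  simp [h.ne]

lemma MaximalRect.left_eq_of_card_fpF_eq {i0 i1 : Fin m} {j0 j0' j1 : Fin n}
    (hmax : MaximalRect M i0 i1 j0 j1) (hmax' : MaximalRect M i0 i1 j0' j1)
    (hcard : (fpF M i0 i1 j0 j1).card = (fpF M i0 i1 j0' j1).card) : j0 = j0' := by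
  rcases lt_trichotomy j0 j0' with h | h | h
  · exact absurd hcard (hmax'.card_fpF_lt_of_lt h).ne'
  · exact h
  · exact absurd hcard (hmax.card_fpF_lt_of_lt h).ne

end Fingerprint

/-- The number of maximal rectangles of an m×n image over colors [1,σ] is at most
n·m²·σ. -/
theorem statement0 (m n σ : ℕ) (M : Fin m → Fin n → Fin σ) :
    {r : Fin m × Fin m × Fin n × Fin n |
      MaximalRect M r.1 r.2.1 r.2.2.1 r.2.2.2}.ncard ≤ n * m ^ 2 * σ := by
  let code : Fin m × Fin m × Fin n × Fin n → Fin m × Fin m × Fin n × ℕ :=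
    fun r => (r.1, r.2.1, r.2.2.2, (fpF M r.1 r.2.1 r.2.2.1 r.2.2.2).card)
  let codes : Finset (Fin m × Fin m × Fin n × ℕ) :=
    Finset.univ ×ˢ Finset.univ ×ˢ Finset.univ ×ˢ Finset.Icc 1 σ
  have hmaps : ∀ r ∈ {r : Fin m × Fin m × Fin n × Fin n |
      MaximalRect M r.1 r.2.1 r.2.2.1 r.2.2.2}, code r ∈ (codes : Set _) := by
    rintro r ⟨hi, hj, -⟩
    simpa [code, codes] using card_fpF_mem_Icc M hi hj
  have hinj : Set.InjOn code {r : Fin m × Fin m × Fin n × Fin n |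
      MaximalRect M r.1 r.2.1 r.2.2.1 r.2.2.2} := by
    rintro ⟨i0, i1, j0, j1⟩ hmax ⟨i0', i1', j0', j1'⟩ hmax' hcode
    obtain ⟨rfl, rfl, rfl, hcard⟩ : i0 = i0' ∧ i1 = i1' ∧ j1 = j1' ∧ _ := by
      simpa [code] using hcode
    obtain rfl : j0 = j0' := MaximalRect.left_eq_of_card_fpF_eq hmax hmax' hcard
    rfl
  calc _ ≤ (codes : Set _).ncard := Set.ncard_le_ncard_of_injOn code hmaps hinj codes.finite_toSet
    _ = n * m ^ 2 * σ := by
      rw [Set.ncard_coe_finset]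
      simp only [codes, Finset.card_product, Finset.card_univ, Fintype.card_fin, Nat.card_Icc,
        Nat.add_sub_cancel]
      ring
end

section
/- A square [i,j;k] in an image is maximal (among squares) if and only if the Boolean condition (L ∨ U ∨ LU) ∧ (L ∨ D ∨ LD) ∧ (R ∨ U ∨ RU) ∧ (R ∨ D ∨ RD) holds, where the conditions are as defined in the context. -/
/-!
A square strictly inside a larger square of the same fingerprint is already inside one of the
four squares of size `k + 1` containing it, and fingerprints are monotone, so maximality only
has to be tested against those four. Each of them is the union of the two one-sided extensions
through its corner together with the corner cell, so its fingerprint equals `f` exactly when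
both one-sided extensions keep `f` and the corner colour lies in `f`.
-/

/-- Fingerprint (set of distinct colors) of the rectangle ⟨i₀,i₁;j₀,j₁⟩ of a
1-indexed image `M`. -/
def fpR (M : ℕ → ℕ → ℕ) (i0 i1 j0 j1 : ℕ) : Set ℕ :=
  {c | ∃ i j, i0 ≤ i ∧ i ≤ i1 ∧ j0 ≤ j ∧ j ≤ j1 ∧ M i j = c}

/-- Fingerprint of the square [i,j;k] = ⟨i,i+k−1;j,j+k−1⟩. -/
def fpSq (M : ℕ → ℕ → ℕ) (i j k : ℕ) : Set ℕ :=
  fpR M i (i + k - 1) j (j + k - 1)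

/-- The square [i,j;k] fits inside the m×n image (1-indexed). -/
def ValidSq (m n i j k : ℕ) : Prop :=
  1 ≤ i ∧ 1 ≤ j ∧ 1 ≤ k ∧ i + k - 1 ≤ m ∧ j + k - 1 ≤ n

/-- The square [i,j;k] is contained in the square [i',j';k']. -/
def SqContains (i j k i' j' k' : ℕ) : Prop :=
  i' ≤ i ∧ j' ≤ j ∧ i + k ≤ i' + k' ∧ j + k ≤ j' + k'

/-- A square is maximal if it is not contained in a larger square with the same
fingerprint. -/
def SqMaximal (M : ℕ → ℕ → ℕ) (m n i j k : ℕ) : Prop :=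
  ValidSq m n i j k ∧
  ∀ i' j' k' : ℕ, ValidSq m n i' j' k' → SqContains i j k i' j' k' →
    (i', j', k') ≠ (i, j, k) → fpSq M i' j' k' ≠ fpSq M i j k

open Set

theorem Set.union_union_singleton_eq_iff {α : Type*} {A B f : Set α} {x : α}
    (hA : f ⊆ A) (hB : f ⊆ B) : A ∪ B ∪ {x} = f ↔ A = f ∧ B = f ∧ x ∈ f := by
  constructor
  · intro h
    refine ⟨hA.antisymm' ?_, hB.antisymm' ?_, h ▸ Or.inr rfl⟩ <;> rw [← h] <;> intro y hy
    exacts [Or.inl (Or.inl hy), Or.inl (Or.inr hy)]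
  · rintro ⟨rfl, rfl, hx⟩
    rw [union_self, union_eq_left, singleton_subset_iff]
    exact hx

section Fingerprint

variable (M : ℕ → ℕ → ℕ)

theorem fpR_mono {a0 a1 b0 b1 c0 c1 d0 d1 : ℕ}
    (h0 : c0 ≤ a0) (h1 : a1 ≤ c1) (h2 : d0 ≤ b0) (h3 : b1 ≤ d1) :
    fpR M a0 a1 b0 b1 ⊆ fpR M c0 c1 d0 d1 := by
  rintro _ ⟨p, q, hp0, hp1, hq0, hq1, rfl⟩
  exact ⟨p, q, h0.trans hp0, hp1.trans h1, h2.trans hq0, hq1.trans h3, rfl⟩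

theorem fpR_eq_image_Icc (a0 a1 b0 b1 : ℕ) :
    fpR M a0 a1 b0 b1 = Function.uncurry M '' Icc (a0, b0) (a1, b1) := by
  ext c
  simp only [fpR, mem_image, mem_Icc, Prod.exists, Prod.mk_le_mk,
    Function.uncurry_apply_pair]
  constructor
  · rintro ⟨p, q, hp0, hp1, hq0, hq1, rfl⟩
    exact ⟨p, q, ⟨⟨hp0, hq0⟩, hp1, hq1⟩, rfl⟩
  · rintro ⟨p, q, ⟨⟨hp0, hq0⟩, hp1, hq1⟩, rfl⟩
    exact ⟨p, q, hp0, hp1, hq0, hq1, rfl⟩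

theorem fpR_eq_union_of_Icc_eq {a0 a1 b0 b1 c0 c1 d0 d1 e0 e1 g0 g1 p q : ℕ}
    (h : Icc (a0, b0) (a1, b1) = Icc (c0, d0) (c1, d1) ∪ Icc (e0, g0) (e1, g1) ∪ {(p, q)}) :
    fpR M a0 a1 b0 b1 = fpR M c0 c1 d0 d1 ∪ fpR M e0 e1 g0 g1 ∪ {M p q} := by
  simp only [fpR_eq_image_Icc, h, image_union, image_singleton, Function.uncurry_apply_pair]

-- `1 ≤ k` matters: truncated subtraction makes `fpSq M 0 0 0 = {M 0 0}` rather than `∅`.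
theorem fpSq_mono {i j k i' j' k' : ℕ} (h : SqContains i j k i' j' k') (hk : 1 ≤ k) :
    fpSq M i j k ⊆ fpSq M i' j' k' := by
  obtain ⟨hi, hj, hik, hjk⟩ := h
  exact fpR_mono M hi (by omega) hj (by omega)

end Fingerprint

theorem ValidSq.of_sqContains {m n i j k i' j' k' : ℕ} (hv : ValidSq m n i' j' k')
    (h : SqContains i j k i' j' k') (hk : 1 ≤ k) : ValidSq m n i j k := by
  unfold ValidSq SqContains at *
  omega

theorem SqContains.exists_succ {i j k i' j' k' : ℕ} (h : SqContains i j k i' j' k')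
    (hk : k < k') :
    ∃ a b, (a = i - 1 ∨ a = i) ∧ (b = j - 1 ∨ b = j) ∧
      SqContains i j k a b (k + 1) ∧ SqContains a b (k + 1) i' j' k' := by
  unfold SqContains at *
  refine ⟨if i' < i then i - 1 else i, if j' < j then j - 1 else j, ?_⟩
  split_ifs <;> omega

theorem sqMaximal_iff_forall_succ (M : ℕ → ℕ → ℕ) {m n i j k : ℕ}
    (hv : ValidSq m n i j k) :
    SqMaximal M m n i j k ↔ ∀ a b, (a = i - 1 ∨ a = i) → (b = j - 1 ∨ b = j) →
      ¬(ValidSq m n a b (k + 1) ∧ fpSq M a b (k + 1) = fpSq M i j k) := by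
  have hk : 1 ≤ k := hv.2.2.1
  constructor
  · rintro ⟨-, hmax⟩ a b ha hb ⟨hv', hfp⟩
    refine hmax a b (k + 1) hv' (by unfold SqContains; omega) ?_ hfp
    simp only [ne_eq, Prod.mk.injEq]
    omega
  · refine fun h => ⟨hv, fun i' j' k' hv' hc hne hfp => ?_⟩
    have hlt : k < k' := by
      by_contra hle
      unfold SqContains at hc
      exact hne (by simp only [Prod.mk.injEq]; omega)
    obtain ⟨a, b, ha, hb, hab, hab'⟩ := hc.exists_succ hlt
    refine h a b ha hb ⟨hv'.of_sqContains hab' (by omega), ?_⟩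
    exact ((fpSq_mono M hab' (by omega)).trans hfp.le).antisymm (fpSq_mono M hab hk)

section Corners

variable (M : ℕ → ℕ → ℕ) {m n i j k : ℕ}

theorem leftUp_condition_iff (hv : ValidSq m n i j k) :
    ¬(ValidSq m n i (j - 1) (k + 1) ∧ fpSq M i (j - 1) (k + 1) = fpSq M i j k) ↔
      ((j = 1 ∨ fpR M i (i + k - 1) (j - 1) (j + k - 1) ≠ fpSq M i j k) ∨
       (i + k - 1 = m ∨ fpR M i (i + k) j (j + k - 1) ≠ fpSq M i j k) ∨
       ((j = 1 ∨ i + k - 1 = m) ∨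
         (M (i + k) (j - 1) ∉ fpSq M i j k ∧
           fpR M i (i + k) j (j + k - 1) = fpSq M i j k))) := by
  obtain ⟨hi, hj, hk, him, hjn⟩ := hv
  have hval : ValidSq m n i (j - 1) (k + 1) ↔ ¬(j = 1 ∨ i + k - 1 = m) := by
    unfold ValidSq; omega
  have hfp : fpSq M i (j - 1) (k + 1) = fpR M i (i + k - 1) (j - 1) (j + k - 1) ∪
      fpR M i (i + k) j (j + k - 1) ∪ {M (i + k) (j - 1)} := by
    rw [fpSq, show i + (k + 1) - 1 = i + k by omega, show j - 1 + (k + 1) - 1 = j + k - 1 by omega]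
    refine fpR_eq_union_of_Icc_eq M ?_
    ext ⟨p, q⟩
    simp only [mem_union, mem_Icc, mem_singleton_iff, Prod.mk_le_mk, Prod.mk.injEq]
    omega
  rw [hval, hfp, union_union_singleton_eq_iff (f := fpSq M i j k)
    (fpR_mono M le_rfl le_rfl (by omega) le_rfl) (fpR_mono M le_rfl (by omega) le_rfl le_rfl)]
  tauto

theorem leftDown_condition_iff (hv : ValidSq m n i j k) :
    ¬(ValidSq m n (i - 1) (j - 1) (k + 1) ∧ fpSq M (i - 1) (j - 1) (k + 1) = fpSq M i j k) ↔
      ((j = 1 ∨ fpR M i (i + k - 1) (j - 1) (j + k - 1) ≠ fpSq M i j k) ∨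
       (i = 1 ∨ fpR M (i - 1) (i + k - 1) j (j + k - 1) ≠ fpSq M i j k) ∨
       ((i = 1 ∨ j = 1) ∨ M (i - 1) (j - 1) ∉ fpSq M i j k)) := by
  obtain ⟨hi, hj, hk, him, hjn⟩ := hv
  have hval : ValidSq m n (i - 1) (j - 1) (k + 1) ↔ ¬(i = 1 ∨ j = 1) := by
    unfold ValidSq; omega
  have hfp : fpSq M (i - 1) (j - 1) (k + 1) = fpR M i (i + k - 1) (j - 1) (j + k - 1) ∪
      fpR M (i - 1) (i + k - 1) j (j + k - 1) ∪ {M (i - 1) (j - 1)} := by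
    rw [fpSq, show i - 1 + (k + 1) - 1 = i + k - 1 by omega,
      show j - 1 + (k + 1) - 1 = j + k - 1 by omega]
    refine fpR_eq_union_of_Icc_eq M ?_
    ext ⟨p, q⟩
    simp only [mem_union, mem_Icc, mem_singleton_iff, Prod.mk_le_mk, Prod.mk.injEq]
    omega
  rw [hval, hfp, union_union_singleton_eq_iff (f := fpSq M i j k)
    (fpR_mono M le_rfl le_rfl (by omega) le_rfl) (fpR_mono M (by omega) le_rfl le_rfl le_rfl)]
  tauto

theorem rightUp_condition_iff (hv : ValidSq m n i j k) :
    ¬(ValidSq m n i j (k + 1) ∧ fpSq M i j (k + 1) = fpSq M i j k) ↔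
      ((j + k - 1 = n ∨ fpR M i (i + k - 1) j (j + k) ≠ fpSq M i j k) ∨
       (i + k - 1 = m ∨ fpR M i (i + k) j (j + k - 1) ≠ fpSq M i j k) ∨
       ((i + k - 1 = m ∨ j + k - 1 = n) ∨ M (i + k) (j + k) ∉ fpSq M i j k)) := by
  obtain ⟨hi, hj, hk, him, hjn⟩ := hv
  have hval : ValidSq m n i j (k + 1) ↔ ¬(i + k - 1 = m ∨ j + k - 1 = n) := by
    unfold ValidSq; omega
  have hfp : fpSq M i j (k + 1) = fpR M i (i + k - 1) j (j + k) ∪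
      fpR M i (i + k) j (j + k - 1) ∪ {M (i + k) (j + k)} := by
    rw [fpSq, show i + (k + 1) - 1 = i + k by omega, show j + (k + 1) - 1 = j + k by omega]
    refine fpR_eq_union_of_Icc_eq M ?_
    ext ⟨p, q⟩
    simp only [mem_union, mem_Icc, mem_singleton_iff, Prod.mk_le_mk, Prod.mk.injEq]
    omega
  rw [hval, hfp, union_union_singleton_eq_iff (f := fpSq M i j k)
    (fpR_mono M le_rfl le_rfl le_rfl (by omega)) (fpR_mono M le_rfl (by omega) le_rfl le_rfl)]
  tauto

theorem rightDown_condition_iff (hv : ValidSq m n i j k) :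
    ¬(ValidSq m n (i - 1) j (k + 1) ∧ fpSq M (i - 1) j (k + 1) = fpSq M i j k) ↔
      ((j + k - 1 = n ∨ fpR M i (i + k - 1) j (j + k) ≠ fpSq M i j k) ∨
       (i = 1 ∨ fpR M (i - 1) (i + k - 1) j (j + k - 1) ≠ fpSq M i j k) ∨
       ((i = 1 ∨ j + k - 1 = n) ∨
         (M (i - 1) (j + k) ∉ fpSq M i j k ∧
           fpR M i (i + k - 1) j (j + k) = fpSq M i j k))) := by
  obtain ⟨hi, hj, hk, him, hjn⟩ := hv
  have hval : ValidSq m n (i - 1) j (k + 1) ↔ ¬(i = 1 ∨ j + k - 1 = n) := by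
    unfold ValidSq; omega
  have hfp : fpSq M (i - 1) j (k + 1) = fpR M i (i + k - 1) j (j + k) ∪
      fpR M (i - 1) (i + k - 1) j (j + k - 1) ∪ {M (i - 1) (j + k)} := by
    rw [fpSq, show i - 1 + (k + 1) - 1 = i + k - 1 by omega,
      show j + (k + 1) - 1 = j + k by omega]
    refine fpR_eq_union_of_Icc_eq M ?_
    ext ⟨p, q⟩
    simp only [mem_union, mem_Icc, mem_singleton_iff, Prod.mk_le_mk, Prod.mk.injEq]
    omega
  rw [hval, hfp, union_union_singleton_eq_iff (f := fpSq M i j k)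
    (fpR_mono M le_rfl le_rfl le_rfl (by omega)) (fpR_mono M (by omega) le_rfl le_rfl le_rfl)]
  tauto

end Corners

theorem statement13_general (m n : ℕ) (M : ℕ → ℕ → ℕ)
    (i j k : ℕ) (hv : ValidSq m n i j k) :
    SqMaximal M m n i j k ↔
      (let f := fpSq M i j k
       let L := j = 1 ∨ fpR M i (i + k - 1) (j - 1) (j + k - 1) ≠ f
       let R := j + k - 1 = n ∨ fpR M i (i + k - 1) j (j + k) ≠ f
       let U := i + k - 1 = m ∨ fpR M i (i + k) j (j + k - 1) ≠ f
       let D := i = 1 ∨ fpR M (i - 1) (i + k - 1) j (j + k - 1) ≠ f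
       let LU := (j = 1 ∨ i + k - 1 = m) ∨
         (M (i + k) (j - 1) ∉ f ∧ fpR M i (i + k) j (j + k - 1) = f)
       let LD := (i = 1 ∨ j = 1) ∨ M (i - 1) (j - 1) ∉ f
       let RU := (i + k - 1 = m ∨ j + k - 1 = n) ∨ M (i + k) (j + k) ∉ f
       let RD := (i = 1 ∨ j + k - 1 = n) ∨
         (M (i - 1) (j + k) ∉ f ∧ fpR M i (i + k - 1) j (j + k) = f)
       (L ∨ U ∨ LU) ∧ (L ∨ D ∨ LD) ∧ (R ∨ U ∨ RU) ∧ (R ∨ D ∨ RD)) := by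
  dsimp only
  rw [← leftUp_condition_iff M hv, ← leftDown_condition_iff M hv,
    ← rightUp_condition_iff M hv, ← rightDown_condition_iff M hv, sqMaximal_iff_forall_succ M hv]
  constructor
  · intro h
    exact ⟨h _ _ (.inr rfl) (.inl rfl), h _ _ (.inl rfl) (.inl rfl), h _ _ (.inr rfl) (.inr rfl),
      h _ _ (.inl rfl) (.inr rfl)⟩
  · rintro ⟨hLU, hLD, hRU, hRD⟩ a b (rfl | rfl) (rfl | rfl)
    exacts [hLD, hRD, hLU, hRU]

/-- A square [i,j;k] is maximal among squares iff
(L ∨ U ∨ LU) ∧ (L ∨ D ∨ LD) ∧ (R ∨ U ∨ RU) ∧ (R ∨ D ∨ RD) holds, where each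
condition takes the value true when the corresponding extension leaves the
image. -/
theorem statement13 (m n σ : ℕ) (M : ℕ → ℕ → ℕ)
    (hM : ∀ i j, 1 ≤ i → i ≤ m → 1 ≤ j → j ≤ n → 1 ≤ M i j ∧ M i j ≤ σ)
    (i j k : ℕ) (hv : ValidSq m n i j k) :
    SqMaximal M m n i j k ↔
      (let f := fpSq M i j k
       let L := j = 1 ∨ fpR M i (i + k - 1) (j - 1) (j + k - 1) ≠ f
       let R := j + k - 1 = n ∨ fpR M i (i + k - 1) j (j + k) ≠ f
       let U := i + k - 1 = m ∨ fpR M i (i + k) j (j + k - 1) ≠ f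
       let D := i = 1 ∨ fpR M (i - 1) (i + k - 1) j (j + k - 1) ≠ f
       let LU := (j = 1 ∨ i + k - 1 = m) ∨
         (M (i + k) (j - 1) ∉ f ∧ fpR M i (i + k) j (j + k - 1) = f)
       let LD := (i = 1 ∨ j = 1) ∨ M (i - 1) (j - 1) ∉ f
       let RU := (i + k - 1 = m ∨ j + k - 1 = n) ∨ M (i + k) (j + k) ∉ f
       let RD := (i = 1 ∨ j + k - 1 = n) ∨
         (M (i - 1) (j + k) ∉ f ∧ fpR M i (i + k - 1) j (j + k) = f)
       (L ∨ U ∨ LU) ∧ (L ∨ D ∨ LD) ∧ (R ∨ U ∨ RU) ∧ (R ∨ D ∨ RD)) :=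
  statement13_general m n M i j k hv
end

section
/- For an m×n image with colors in [1,σ], the number of maximal squares is at most n·m·σ. -/
/-!
Send a maximal square `[i,j;k]` to `(i, j, |fingerprint|)`. Fingerprints of squares with a
common corner grow with `k`, and a maximal square cannot share its fingerprint with a larger
square at the same corner, so along a corner the fingerprint sizes of maximal squares are
pairwise distinct. Hence the map is injective into `[1,m] × [1,n] × [1,σ]`.
-/

lemma fpR_finite (M : ℕ → ℕ → ℕ) (i0 i1 j0 j1 : ℕ) : (fpR M i0 i1 j0 j1).Finite := by
  refine (((Set.finite_Icc i0 i1).prod (Set.finite_Icc j0 j1)).image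
    fun p => M p.1 p.2).subset ?_
  rintro c ⟨i, j, hi0, hi1, hj0, hj1, rfl⟩
  exact ⟨(i, j), ⟨⟨hi0, hi1⟩, hj0, hj1⟩, rfl⟩

lemma fpSq_finite (M : ℕ → ℕ → ℕ) (i j k : ℕ) : (fpSq M i j k).Finite :=
  fpR_finite M _ _ _ _

lemma fpSq_nonempty (M : ℕ → ℕ → ℕ) (i j : ℕ) {k : ℕ} (hk : 1 ≤ k) :
    (fpSq M i j k).Nonempty :=
  ⟨M i j, i, j, le_rfl, by omega, le_rfl, by omega, rfl⟩

lemma fpSq_mono_s14 (M : ℕ → ℕ → ℕ) (i j : ℕ) : Monotone (fpSq M i j) := by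
  intro k k' hkk'
  rintro c ⟨i', j', hi0, hi1, hj0, hj1, rfl⟩
  exact ⟨i', j', hi0, by omega, hj0, by omega, rfl⟩

lemma fpSq_subset_Icc {m n σ : ℕ} {M : ℕ → ℕ → ℕ}
    (hM : ∀ i j, 1 ≤ i → i ≤ m → 1 ≤ j → j ≤ n → 1 ≤ M i j ∧ M i j ≤ σ)
    {i j k : ℕ} (h : ValidSq m n i j k) : fpSq M i j k ⊆ Set.Icc 1 σ := by
  obtain ⟨hi, hj, -, him, hjn⟩ := h
  rintro c ⟨i', j', hi0, hi1, hj0, hj1, rfl⟩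
  exact hM i' j' (hi.trans hi0) (hi1.trans him) (hj.trans hj0) (hj1.trans hjn)

lemma ncard_fpSq_mem_Icc {m n σ : ℕ} {M : ℕ → ℕ → ℕ}
    (hM : ∀ i j, 1 ≤ i → i ≤ m → 1 ≤ j → j ≤ n → 1 ≤ M i j ∧ M i j ≤ σ)
    {i j k : ℕ} (h : ValidSq m n i j k) : (fpSq M i j k).ncard ∈ Finset.Icc 1 σ := by
  refine Finset.mem_Icc.2
    ⟨(Set.ncard_pos (fpSq_finite M i j k)).2 (fpSq_nonempty M i j h.2.2.1), ?_⟩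
  calc (fpSq M i j k).ncard ≤ (Set.Icc 1 σ).ncard :=
        Set.ncard_le_ncard (fpSq_subset_Icc hM h) (Set.finite_Icc 1 σ)
    _ = σ := by simp

lemma SqMaximal.fpSq_ssubset {M : ℕ → ℕ → ℕ} {m n i j k k' : ℕ}
    (hmax : SqMaximal M m n i j k) (hvalid : ValidSq m n i j k') (hkk' : k < k') :
    fpSq M i j k ⊂ fpSq M i j k' := by
  refine (fpSq_mono_s14 M i j hkk'.le).ssubset_of_ne fun heq => ?_
  exact hmax.2 i j k' hvalid ⟨le_rfl, le_rfl, by omega, by omega⟩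
    (by simp [hkk'.ne']) heq.symm

lemma SqMaximal.eq_of_ncard_fpSq_eq {M : ℕ → ℕ → ℕ} {m n i j k k' : ℕ}
    (hmax : SqMaximal M m n i j k) (hmax' : SqMaximal M m n i j k')
    (hcard : (fpSq M i j k).ncard = (fpSq M i j k').ncard) : k = k' := by
  by_contra hne
  rcases Nat.lt_or_gt_of_ne hne with hlt | hlt
  · exact (Set.ncard_lt_ncard (hmax.fpSq_ssubset hmax'.1 hlt) (fpSq_finite M i j k')).ne hcard
  · exact (Set.ncard_lt_ncard (hmax'.fpSq_ssubset hmax.1 hlt) (fpSq_finite M i j k)).ne' hcard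

/-- The number of maximal squares of an m×n image with colors in [1,σ] is at most
n·m·σ. -/
theorem statement14 (m n σ : ℕ) (M : ℕ → ℕ → ℕ)
    (hM : ∀ i j, 1 ≤ i → i ≤ m → 1 ≤ j → j ≤ n → 1 ≤ M i j ∧ M i j ≤ σ) :
    {s : ℕ × ℕ × ℕ | SqMaximal M m n s.1 s.2.1 s.2.2}.ncard ≤ n * m * σ := by
  let box : Finset (ℕ × ℕ × ℕ) := Finset.Icc 1 m ×ˢ Finset.Icc 1 n ×ˢ Finset.Icc 1 σ
  let code : ℕ × ℕ × ℕ → ℕ × ℕ × ℕ := fun s =>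
    (s.1, s.2.1, (fpSq M s.1 s.2.1 s.2.2).ncard)
  have hmaps : Set.MapsTo code {s | SqMaximal M m n s.1 s.2.1 s.2.2} box := by
    rintro ⟨i, j, k⟩ ⟨hvalid : ValidSq m n i j k, -⟩
    have ⟨hi, hj, hk, him, hjn⟩ := hvalid
    simp only [box, code, Finset.coe_product, Set.mem_prod, Finset.mem_coe]
    exact ⟨Finset.mem_Icc.2 ⟨hi, by omega⟩, Finset.mem_Icc.2 ⟨hj, by omega⟩,
      ncard_fpSq_mem_Icc hM hvalid⟩
  have hinj : Set.InjOn code {s | SqMaximal M m n s.1 s.2.1 s.2.2} := by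
    rintro ⟨i, j, k⟩ hs ⟨i', j', k'⟩ hs' h
    simp only [code, Prod.mk.injEq] at h
    obtain ⟨rfl, rfl, hcard⟩ := h
    rw [SqMaximal.eq_of_ncard_fpSq_eq (k := k) hs hs' hcard]
  calc _ ≤ (box : Set (ℕ × ℕ × ℕ)).ncard :=
        Set.ncard_le_ncard_of_injOn code hmaps hinj box.finite_toSet
    _ = n * m * σ := by
      rw [Set.ncard_coe_finset, Finset.card_product, Finset.card_product]
      simp only [Nat.card_Icc, Nat.add_sub_cancel]
      ring
end
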